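/- arXiv:1308.0827 — 3 statements merged into one kernel-verified Lean document; each statement's English description precedes it below -/
import Mathlib

section
/- For every integer g > 1, the graph G obtained from a star with g² + 1 vertices (one centre vertex joined to g² leaves) by replacing each edge by four parallel edges has tree-width one and contains the g×g grid J_g as an immersion. -/
open scoped Classical

noncomputable section

/-- A finite multigraph: a type of vertices, a type of edges, and a map
assigning to each edge its (unordered) pair of ends.  Loops and parallel
edges are allowed. -/
structure Multigraph where
  V : Type
  E : Type
  ends : E → Sym2 V

namespace Multigraph

/-- Walks in a multigraph, recording the edges used. -/
inductive Walk (G : Multigraph) : G.V → G.V → Type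
  | nil (v : G.V) : Walk G v v
  | cons (u v w : G.V) (e : G.E) (he : G.ends e = s(u, v)) (p : Walk G v w) : Walk G u w

namespace Walk

variable {G : Multigraph}

/-- The list of vertices visited by a walk, in order. -/
def support : {u v : G.V} → G.Walk u v → List G.V
  | _, _, .nil x => [x]
  | _, _, .cons u _ _ _ _ p => u :: p.support

/-- The list of edges used by a walk, in order. -/
def edges : {u v : G.V} → G.Walk u v → List G.E
  | _, _, .nil _ => []
  | _, _, .cons _ _ _ e _ p => e :: p.edges

/-- The number of edges of a walk. -/
def length : {u v : G.V} → G.Walk u v → ℕ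
  | _, _, .nil _ => 0
  | _, _, .cons _ _ _ _ _ p => p.length + 1

/-- A path: a walk with no repeated vertex. -/
def IsPath {u v : G.V} (p : G.Walk u v) : Prop := p.support.Nodup

/-- A cycle: a closed walk of positive length with no repeated edge and no
repeated vertex except for the first = last one. -/
def IsCycle {u v : G.V} (p : G.Walk u v) : Prop :=
  u = v ∧ 0 < p.length ∧ p.edges.Nodup ∧ p.support.tail.Nodup

end Walk

/-- An immersion ("strong immersion") of `H` in `G`. -/
structure Immersion (H G : Multigraph) where
  /-- the map on vertices -/
  vmap : H.V → G.V
  /-- first end of the walk representing an edge -/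
  ea : H.E → G.V
  /-- second end of the walk representing an edge -/
  eb : H.E → G.V
  /-- the walk representing an edge -/
  emap : (e : H.E) → G.Walk (ea e) (eb e)
  vmap_inj : Function.Injective vmap
  ends_eq : ∀ e : H.E, s(ea e, eb e) = (H.ends e).map vmap
  path_of_nonloop : ∀ e : H.E, ¬ (H.ends e).IsDiag → (emap e).IsPath
  cycle_of_loop : ∀ e : H.E, (H.ends e).IsDiag → (emap e).IsCycle
  not_mem_of_not_incident :
    ∀ (x : H.V) (e : H.E), x ∉ H.ends e → vmap x ∉ (emap e).support
  edges_disjoint :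
    ∀ e f : H.E, e ≠ f → ∀ d ∈ (emap e).edges, d ∉ (emap f).edges

/-- `G` contains `H` as an immersion. -/
def ImmersesIn (H G : Multigraph) : Prop := Nonempty (Immersion H G)

/-- `G` contains an `S`-rooted immersion of `H`: an immersion mapping every
vertex of `H` into `S`. -/
def RootedImmersesIn (H G : Multigraph) (S : Set G.V) : Prop :=
  ∃ η : Immersion H G, ∀ x : H.V, η.vmap x ∈ S

namespace Immersion

variable {H G : Multigraph}

/-- The vertex set of the image subgraph of an immersion. -/
def vertexSet (η : Immersion H G) : Set G.V :=
  Set.range η.vmap ∪ ⋃ e : H.E, {x | x ∈ (η.emap e).support}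

/-- The edge set of the image subgraph of an immersion. -/
def edgeSet (η : Immersion H G) : Set G.E :=
  ⋃ e : H.E, {d | d ∈ (η.emap e).edges}

/-- A subdivision map: an immersion in which two distinct edges may meet only
at images of common ends.  Its image is a subdivision of `H`. -/
def IsSubdivisionMap (η : Immersion H G) : Prop :=
  ∀ e f : H.E, e ≠ f → ∀ x : G.V, x ∈ (η.emap e).support → x ∈ (η.emap f).support →
    ∃ w : H.V, η.vmap w = x ∧ w ∈ H.ends e ∧ w ∈ H.ends f

/-- `x` is an internal vertex of the walk representing the edge `e`. -/
def IsInternal (η : Immersion H G) (e : H.E) (x : G.V) : Prop :=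
  x ∈ (η.emap e).support ∧ x ≠ η.ea e ∧ x ≠ η.eb e

/-- The vertex set of `η(H ∖ s)`: the union of the walks representing
the edges not incident with `s`, together with the images of the vertices
other than `s`. -/
def vertexSetAvoiding (η : Immersion H G) (s : H.V) : Set G.V :=
  η.vmap '' {v : H.V | v ≠ s} ∪
    ⋃ e ∈ {e : H.E | s ∉ H.ends e}, {x | x ∈ (η.emap e).support}

end Immersion

/-- A subgraph of a multigraph, given by a set of vertices and a set of edges. -/
structure Subgraph (G : Multigraph) where
  verts : Set G.V
  edges : Set G.E
  edge_closed : ∀ e ∈ edges, ∀ v ∈ G.ends e, v ∈ verts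

/-- A subgraph is connected if it is nonempty and any two of its vertices are
joined by a walk inside it. -/
def Subgraph.Connected {G : Multigraph} (X : Subgraph G) : Prop :=
  X.verts.Nonempty ∧ ∀ x ∈ X.verts, ∀ y ∈ X.verts, ∃ p : G.Walk x y,
    (∀ v ∈ p.support, v ∈ X.verts) ∧ ∀ d ∈ p.edges, d ∈ X.edges

/-- The degree of `x` with respect to a set `ES` of edges of `G`
(loops counting twice). -/
def degreeIn (G : Multigraph) [Fintype G.E] (ES : Set G.E) (x : G.V) : ℕ :=
  ∑ e : G.E, if e ∈ ES ∧ x ∈ G.ends e then (if (G.ends e).IsDiag then 2 else 1) else 0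

/-- A set of vertices is connected in `G` if any two of its members are joined
by a walk staying inside it. -/
def ConnectedIn (G : Multigraph) (S : Set G.V) : Prop :=
  ∀ x ∈ S, ∀ y ∈ S, ∃ p : G.Walk x y, ∀ z ∈ p.support, z ∈ S

/-- `H` is a minor of `G`: `H` is obtained from a subgraph of `G` by
contracting edges.  Equivalently there are nonempty, pairwise disjoint,
connected branch sets in `G`, one for each vertex of `H`, and an injection of
`E(H)` into `E(G)` sending each edge to an edge joining the corresponding
branch sets. -/
def IsMinor (H G : Multigraph) : Prop :=
  ∃ (β : H.V → Set G.V) (φ : H.E → G.E),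
    (∀ v, (β v).Nonempty) ∧
    (∀ v, G.ConnectedIn (β v)) ∧
    (Pairwise fun u v => Disjoint (β u) (β v)) ∧
    Function.Injective φ ∧
    (∀ (e : H.E) (u v : H.V), H.ends e = s(u, v) →
      ∃ x ∈ β u, ∃ y ∈ β v, G.ends (φ e) = s(x, y))

/-- Two vertices are 4-edge-connected: joined by four pairwise edge-disjoint
paths. -/
def EdgeConn4 (G : Multigraph) (u v : G.V) : Prop :=
  ∃ P : Fin 4 → G.Walk u v, (∀ i, (P i).IsPath) ∧
    ∀ i j, i ≠ j → ∀ e ∈ (P i).edges, e ∉ (P j).edges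

/-- A four-edge-connected multigraph. -/
def FourEdgeConnected (G : Multigraph) : Prop :=
  ∀ u v : G.V, u ≠ v → G.EdgeConn4 u v

/-- A tree-decomposition of a multigraph. -/
structure TreeDecomp (G : Multigraph) where
  ι : Type
  tree : SimpleGraph ι
  isTree : tree.IsTree
  bag : ι → Set G.V
  bag_covers : ∀ v : G.V, ∃ t, v ∈ bag t
  bag_edge : ∀ e : G.E, ∃ t, ∀ v ∈ G.ends e, v ∈ bag t
  bag_consistent : ∀ (t t'' : ι) (p : tree.Walk t t''), p.IsPath →
    ∀ t' ∈ p.support, bag t ∩ bag t'' ⊆ bag t'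

/-- `G` has a tree-decomposition of width at most `k`. -/
def HasWidthLE (G : Multigraph) (k : ℕ) : Prop :=
  ∃ D : TreeDecomp G, ∀ t, (D.bag t).ncard ≤ k + 1

/-- The tree-width of `G`: the least width of a tree-decomposition of `G`. -/
def treewidth (G : Multigraph) : ℕ := sInf {k | G.HasWidthLE k}

/-- The multigraph underlying a simple graph. -/
def ofSimple {V : Type} (G : SimpleGraph V) : Multigraph where
  V := V
  E := G.edgeSet
  ends := fun e => (e : Sym2 V)

end Multigraph

/-- The `g × g` grid, as a simple graph on `Fin g × Fin g`. -/
def gridSimple (g : ℕ) : SimpleGraph (Fin g × Fin g) where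
  Adj p q := Nat.dist p.1.1 q.1.1 + Nat.dist p.2.1 q.2.1 = 1
  symm := by
    constructor
    intro p q h
    simpa [Nat.dist_comm] using h
  loopless := by
    constructor
    intro p h
    simp [Nat.dist_self] at h

/-- The `g × g` grid `J_g`, as a multigraph. -/
def Grid (g : ℕ) : Multigraph := Multigraph.ofSimple (gridSimple g)

/-- The vertex set of the elementary wall of height `h`. -/
def wallVertSet (h : ℕ) : Set (ℕ × ℕ) :=
  {p | 1 ≤ p.1 ∧ p.1 ≤ h + 1 ∧ 1 ≤ p.2 ∧ p.2 ≤ 2 * h + 2 ∧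
    p ≠ (1, 2 * h + 2) ∧ p ≠ (h + 1, 1)}

/-- Adjacency in an elementary wall. -/
def wallAdj (p q : ℕ × ℕ) : Prop :=
  p ≠ q ∧ ((p.1 = q.1 ∧ Nat.dist p.2 q.2 = 1) ∨
    (p.2 = q.2 ∧ Nat.dist p.1 q.1 = 1 ∧ Even (min p.1 q.1 + p.2)))

/-- The elementary wall of height `h`, as a simple graph. -/
def elemWallSimple (h : ℕ) : SimpleGraph (wallVertSet h) where
  Adj a b := wallAdj a.1 b.1
  symm := by
    constructor
    rintro a b ⟨hne, hor⟩
    refine ⟨hne.symm, ?_⟩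
    rcases hor with ⟨h1, h2⟩ | ⟨h1, h2, h3⟩
    · exact Or.inl ⟨h1.symm, by rwa [Nat.dist_comm]⟩
    · exact Or.inr ⟨h1.symm, by rwa [Nat.dist_comm], by rwa [min_comm, ← h1]⟩
  loopless := by
    constructor
    rintro a ⟨hne, -⟩
    exact hne rfl

/-- The elementary wall of height `h`, as a multigraph. -/
def ElemWall (h : ℕ) : Multigraph := Multigraph.ofSimple (elemWallSimple h)

/-- The diagonal vertices `v_{i,2i}` `(2 ≤ i ≤ h)` of the elementary wall of
height `h`. -/
def diagVerts (h : ℕ) : Set (ElemWall h).V :=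
  {v | ∃ i : ℕ, 2 ≤ i ∧ i ≤ h ∧ v.1 = (i, 2 * i)}

/-- The surround of a vertex `s` of the wall `η`: all wall vertices `u` with
`u = s` or joined to `s` by a path of the wall in which every vertex other
than `s` has degree two in the wall. -/
def surround {h : ℕ} {G : Multigraph} [Fintype G.E]
    (η : Multigraph.Immersion (ElemWall h) G) (s : G.V) : Set G.V :=
  {u | u ∈ η.vertexSet ∧ (u = s ∨ ∃ p : G.Walk u s, p.IsPath ∧
    (∀ d ∈ p.edges, d ∈ η.edgeSet) ∧
    ∀ w ∈ p.support, w ≠ s → G.degreeIn η.edgeSet w = 2)}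

/-- A fin system `(W, (s_i, F_i, t_i)_{1 ≤ i ≤ b})` in `G`: a wall `W` in `G`
(presented by a subdivision map `η` of an elementary wall), distinct diagonal
vertices `s_1, …, s_b` of `W`, and for each `i` a fin `(s_i, F_i, t_i)`,
such that `s_i ∉ V(F_j)` for `i ≠ j`. -/
structure FinSystem (G : Multigraph) [Fintype G.E] (b : ℕ) where
  height : ℕ
  height_even : Even height
  height_ge : 2 ≤ height
  η : Multigraph.Immersion (ElemWall height) G
  η_sub : η.IsSubdivisionMap
  sv : Fin b → (ElemWall height).V
  sv_diag : ∀ i, sv i ∈ diagVerts height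
  sv_inj : Function.Injective sv
  t : Fin b → G.V
  t_wall : ∀ i, t i ∈ η.vertexSet
  t_not_surround : ∀ i, t i ∉ surround η (η.vmap (sv i))
  F : (i : Fin b) → G.Walk (η.vmap (sv i)) (t i)
  F_path : ∀ i, (F i).IsPath
  F_avoids_wall : ∀ i, ∀ d ∈ (F i).edges, d ∉ η.edgeSet
  s_not_mem_other : ∀ i j, i ≠ j → η.vmap (sv i) ∉ (F j).support

/-- The vertices `s_i` of a fin system. -/
def FinSystem.s {G : Multigraph} [Fintype G.E] {b : ℕ} (FS : FinSystem G b)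
    (i : Fin b) : G.V := FS.η.vmap (FS.sv i)

/-! ### The standard drawing of a wall and its distance function -/

/-- The position in the plane of a vertex of the elementary wall in its
standard drawing. -/
def elemPos {h : ℕ} (v : (ElemWall h).V) : ℝ × ℝ := ((v.1.2 : ℝ), (v.1.1 : ℝ))

/-- The point set of the standard drawing of a wall of height `h` (the union
of the straight-line segments representing the branches). -/
def wallDrawing (h : ℕ) : Set (ℝ × ℝ) :=
  ⋃ e : (ElemWall h).E,
    Sym2.lift ⟨fun a b => segment ℝ (elemPos a) (elemPos b),
      fun a b => segment_symm ℝ (elemPos a) (elemPos b)⟩ ((ElemWall h).ends e)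

/-- Index of the first occurrence of `x` in a list (0 if absent). -/
def idxIn {α : Type} (x : α) : List α → ℕ
  | [] => 0
  | a :: l => if x = a then 0 else idxIn x l + 1

/-- The position of an image of a branch vertex of the wall `η` in the
standard drawing. -/
def endPos {h : ℕ} {G : Multigraph}
    (η : Multigraph.Immersion (ElemWall h) G) (y : G.V) : ℝ × ℝ :=
  if hy : ∃ u : (ElemWall h).V, η.vmap u = y then elemPos hy.choose else (0, 0)

/-- The position in the plane of a vertex of the wall `η` in the standard
drawing: branch vertices are placed at lattice points, and the internal
vertices of each branch are spaced evenly along the corresponding segment. -/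
def wallVertPos {h : ℕ} {G : Multigraph}
    (η : Multigraph.Immersion (ElemWall h) G) (x : G.V) : ℝ × ℝ :=
  if hx : ∃ e : (ElemWall h).E, x ∈ (η.emap e).support then
    endPos η (η.ea hx.choose) +
      ((idxIn x (η.emap hx.choose).support : ℝ) / ((η.emap hx.choose).length : ℝ)) •
        (endPos η (η.eb hx.choose) - endPos η (η.ea hx.choose))
  else (0, 0)

/-- The distance between two points relative to a drawing `D` in the plane:
`0` if they are equal, and otherwise the minimum over all arcs `F` of the
plane (sets homeomorphic to `[0,1]`) with the two points as ends of the
number of points of `F` in `D`. -/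
def arcDist (D : Set (ℝ × ℝ)) (p q : ℝ × ℝ) : ℕ :=
  if p = q then 0 else
    sInf {n : ℕ | ∃ γ : ℝ → ℝ × ℝ, ContinuousOn γ (Set.Icc 0 1) ∧
      Set.InjOn γ (Set.Icc 0 1) ∧ γ 0 = p ∧ γ 1 = q ∧
      (γ '' Set.Icc 0 1 ∩ D).Finite ∧ (γ '' Set.Icc 0 1 ∩ D).ncard = n}

/-- The distance between two vertices of the wall `η` in its standard
drawing. -/
def wallDist {h : ℕ} {G : Multigraph}
    (η : Multigraph.Immersion (ElemWall h) G) (x y : G.V) : ℕ :=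
  arcDist (wallDrawing h) (wallVertPos η x) (wallVertPos η y)

end

/-- The star with `n` leaves in which every edge is replaced by four parallel
edges: the centre is `none`, the leaves are `some i`, and for each leaf there
are four parallel edges to the centre. -/
def fourStar (n : ℕ) : Multigraph where
  V := Option (Fin n)
  E := Fin n × Fin 4
  ends := fun e => s(none, some e.1)

/-!
The star decomposition, with one bag `{centre, v}` for each vertex `v`, has width one, and
no decomposition of width zero can put both ends of an edge into one bag.

For the immersion, send each grid vertex to its own leaf and each grid edge `xy` to the path
`x`, centre, `y`. Label the four parallel edges at every leaf by the four directions of the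
grid, and let the path of `xy` leave `x` by the edge labelled with the direction of `y` from
`x`. A grid vertex has at most one neighbour in each direction, so a used edge of the star
determines the grid edge using it, and the paths are edge-disjoint.
-/

namespace Multigraph

variable {G : Multigraph}

lemma HasWidthLE.mono {j k : ℕ} (hjk : j ≤ k) (h : G.HasWidthLE j) : G.HasWidthLE k :=
  let ⟨D, hD⟩ := h
  ⟨D, fun t => (hD t).trans (by omega)⟩

lemma treewidth_eq_succ_iff (k : ℕ) :
    G.treewidth = k + 1 ↔ G.HasWidthLE (k + 1) ∧ ¬ G.HasWidthLE k :=
  Nat.sInf_upward_closed_eq_succ_iff (fun _ _ hjk h => HasWidthLE.mono hjk h) k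

def starTreeDecomp (c : G.V) (hc : ∀ e, c ∈ G.ends e) : TreeDecomp G where
  ι := G.V
  tree := SimpleGraph.starGraph c
  isTree := SimpleGraph.isTree_starGraph c
  bag t := {c, t}
  bag_covers v := ⟨v, Or.inr rfl⟩
  bag_edge e := ⟨Sym2.Mem.other (hc e), fun v hv => by
    rw [← Sym2.other_spec (hc e), Sym2.mem_iff] at hv
    exact hv⟩
  bag_consistent t t'' p hp t' ht' := by
    rcases eq_or_ne t t'' with rfl | hne
    · rw [SimpleGraph.Walk.nil_iff_support_eq.mp (SimpleGraph.Walk.isPath_iff_nil.mp hp),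
        List.mem_singleton] at ht'
      subst ht'
      exact Set.inter_subset_left
    · rintro x ⟨rfl | rfl, hx⟩
      · exact Or.inl rfl
      obtain rfl | rfl := hx
      exacts [Or.inl rfl, absurd rfl hne]

lemma hasWidthLE_one_of_forall_mem_ends (c : G.V) (hc : ∀ e, c ∈ G.ends e) :
    G.HasWidthLE 1 :=
  ⟨starTreeDecomp c hc, fun (t : G.V) =>
    (Set.ncard_insert_le c {t}).trans (by rw [Set.ncard_singleton])⟩

lemma not_hasWidthLE_zero [Finite G.V] (e : G.E) (he : ¬ (G.ends e).IsDiag) :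
    ¬ G.HasWidthLE 0 := by
  rintro ⟨D, hD⟩
  obtain ⟨t, ht⟩ := D.bag_edge e
  induction hends : G.ends e using Sym2.ind with
  | _ x y =>
    rw [hends, Sym2.mk_isDiag_iff] at he
    rw [hends] at ht
    have hsub : ({x, y} : Set G.V) ⊆ D.bag t := by
      rintro v (rfl | rfl)
      exacts [ht v (Sym2.mem_mk_left _ _), ht v (Sym2.mem_mk_right _ _)]
    have := (Set.ncard_pair he).symm.trans_le (Set.ncard_le_ncard hsub (Set.toFinite _))
    have := hD t
    omega

end Multigraph

open Multigraph

lemma treewidth_fourStar {n : ℕ} (hn : 0 < n) : (fourStar n).treewidth = 1 :=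
  have : Finite (fourStar n).V := inferInstanceAs (Finite (Option (Fin n)))
  (treewidth_eq_succ_iff 0).2
    ⟨hasWidthLE_one_of_forall_mem_ends (G := fourStar n) none fun _ => Sym2.mem_mk_left _ _,
      not_hasWidthLE_zero (G := fourStar n) (⟨0, hn⟩, 0) (by simp [fourStar])⟩

def fourStar.walkViaCentre {n : ℕ} (x y : Fin n) (i j : Fin 4) :
    (fourStar n).Walk (some x) (some y) :=
  .cons (G := fourStar n) (some x) none (some y) (x, i) Sym2.eq_swap
    (.cons (G := fourStar n) none (some y) (some y) (y, j) rfl (.nil (G := fourStar n) (some y)))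

lemma Sym2.mk_out {α : Type} (z : Sym2 α) : s(z.out.1, z.out.2) = z := Quot.out_eq z

lemma SimpleGraph.adj_of_edgeSet_out {V : Type} {H : SimpleGraph V} (e : H.edgeSet) :
    H.Adj e.1.out.1 e.1.out.2 :=
  H.mem_edgeSet.mp (by rw [Sym2.mk_out]; exact e.2)

namespace fourStar

variable {V : Type} {H : SimpleGraph V} {n : ℕ} (f : V ↪ Fin n) (port : V → V → Fin 4)

noncomputable def portWalk (e : H.edgeSet) :
    (fourStar n).Walk (some (f e.1.out.1)) (some (f e.1.out.2)) :=
  walkViaCentre (f e.1.out.1) (f e.1.out.2) (port e.1.out.1 e.1.out.2) (port e.1.out.2 e.1.out.1)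

lemma isPath_portWalk (e : H.edgeSet) : (portWalk f port e).IsPath := by
  -- `(fourStar n).V` unfolds to `Option (Fin n)` only semireducibly, which blocks `simp`
  change List.Nodup (α := Option (Fin n)) [some (f e.1.out.1), none, some (f e.1.out.2)]
  simp [f.injective.ne (H.adj_of_edgeSet_out e).ne]

lemma mem_of_mem_support_portWalk {e : H.edgeSet} {x : V}
    (hx : some (f x) ∈ (portWalk f port e).support) : x ∈ e.1 := by
  change (some (f x) : Option (Fin n)) ∈ [some (f e.1.out.1), none, some (f e.1.out.2)] at hx
  rw [← Sym2.mk_out e.1]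
  simp only [List.mem_cons, Option.some_inj, f.injective.eq_iff, reduceCtorEq,
    false_or, List.not_mem_nil, or_false] at hx
  rcases hx with rfl | rfl
  exacts [Sym2.mem_mk_left _ _, Sym2.mem_mk_right _ _]

lemma exists_adj_of_mem_edges_portWalk {e : H.edgeSet} {d : (fourStar n).E}
    (hd : d ∈ (portWalk f port e).edges) :
    ∃ x y, H.Adj x y ∧ s(x, y) = e.1 ∧ d = (f x, port x y) := by
  change d ∈ [_, _] at hd
  rcases List.mem_pair.mp hd with rfl | rfl
  · exact ⟨_, _, H.adj_of_edgeSet_out e, Sym2.mk_out _, rfl⟩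
  · exact ⟨_, _, (H.adj_of_edgeSet_out e).symm, Sym2.eq_swap.trans (Sym2.mk_out _), rfl⟩

variable {f port}

lemma eq_of_mem_edges_portWalk
    (hport : ∀ ⦃x y z⦄, H.Adj x y → H.Adj x z → port x y = port x z → y = z)
    {e e' : H.edgeSet} {d : (fourStar n).E}
    (hd : d ∈ (portWalk f port e).edges) (hd' : d ∈ (portWalk f port e').edges) : e = e' := by
  obtain ⟨x, y, hxy, he, rfl⟩ := exists_adj_of_mem_edges_portWalk f port hd
  obtain ⟨x', y', hxy', he', hd⟩ := exists_adj_of_mem_edges_portWalk f port hd'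
  obtain ⟨hfx, hp⟩ := Prod.mk.inj hd
  obtain rfl := f.injective hfx
  obtain rfl := hport hxy hxy' hp
  exact Subtype.ext (he.symm.trans he')

variable (f port)

noncomputable def immersionOfPortLabelling
    (hport : ∀ ⦃x y z⦄, H.Adj x y → H.Adj x z → port x y = port x z → y = z) :
    Immersion (ofSimple H) (fourStar n) where
  vmap x := some (f x)
  ea e := some (f e.1.out.1)
  eb e := some (f e.1.out.2)
  emap := portWalk f port
  vmap_inj _ _ h := f.injective (Option.some_injective _ h)
  ends_eq (e : H.edgeSet) := by
    change _ = Sym2.map _ e.1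
    conv_rhs => rw [← Sym2.mk_out e.1]
    rfl
  path_of_nonloop e _ := isPath_portWalk f port e
  cycle_of_loop e hloop := (H.not_isDiag_of_mem_edgeSet e.2 hloop).elim
  not_mem_of_not_incident _ _ hx hmem := hx (mem_of_mem_support_portWalk f port hmem)
  edges_disjoint e e' hne d hd hd' := hne (eq_of_mem_edges_portWalk hport hd hd')

end fourStar

def gridDir {g : ℕ} (x y : Fin g × Fin g) : Fin 4 :=
  if x.1 = y.1 then (if x.2 < y.2 then 0 else 1) else (if x.1 < y.1 then 2 else 3)

lemma gridDir_injective {g : ℕ} ⦃x y z : Fin g × Fin g⦄ (hxy : (gridSimple g).Adj x y)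
    (hxz : (gridSimple g).Adj x z) (h : gridDir x y = gridDir x z) : y = z := by
  obtain ⟨⟨x1, _⟩, ⟨x2, _⟩⟩ := x
  obtain ⟨⟨y1, _⟩, ⟨y2, _⟩⟩ := y
  obtain ⟨⟨z1, _⟩, ⟨z2, _⟩⟩ := z
  simp only [gridSimple, Nat.dist] at hxy hxz
  simp only [gridDir, Fin.mk.injEq, Fin.mk_lt_mk] at h
  simp only [Prod.mk.injEq, Fin.mk.injEq]
  split_ifs at h <;> simp at h <;> omega

lemma grid_immersesIn_fourStar (g : ℕ) : ImmersesIn (Grid g) (fourStar (g ^ 2)) :=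
  ⟨fourStar.immersionOfPortLabelling (finProdFinEquiv.trans (finCongr (sq g).symm)).toEmbedding
    gridDir gridDir_injective⟩

/-- For every integer `g > 1`, the graph obtained from a
star with `g² + 1` vertices by replacing each edge by four parallel edges has
tree-width one and contains the `g × g` grid `J_g` as an immersion. -/
theorem fourStar_treewidth_one_and_grid_immersion (g : ℕ) (hg : 1 < g) :
    (fourStar (g ^ 2)).treewidth = 1 ∧
      Multigraph.ImmersesIn (Grid g) (fourStar (g ^ 2)) :=
  ⟨treewidth_fourStar (pow_pos (by omega) 2), grid_immersesIn_fourStar g⟩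
end

section
/- Let T be a tree and let S be a set of vertices of T with |S| even. Then S can be partitioned into pairs {x_1,y_1}, …, {x_m,y_m} such that the paths of T joining x_i to y_i (1 ≤ i ≤ m) are pairwise edge-disjoint. -/
open scoped Classical

/-! Among all ways of pairing up `S`, take one minimising the total distance between partners
and join each pair by a shortest path.  If two of these paths shared an edge, re-pairing their
four ends along the pieces before and after that edge would save at least two edges, so the
paths are edge-disjoint. -/

namespace SimpleGraph

variable {V : Type*} {G : SimpleGraph V}

lemma Walk.exists_split_of_mem_edges {a b : V} (p : G.Walk a b) {e : Sym2 V}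
    (he : e ∈ p.edges) :
    ∃ u v, s(u, v) = e ∧ ∃ (q : G.Walk a u) (r : G.Walk v b), q.length + r.length < p.length := by
  induction p with
  | nil => simp at he
  | @cons a c b hac p ih =>
    rcases List.mem_cons.1 he with rfl | he
    · exact ⟨a, c, rfl, .nil, p, by simp⟩
    · obtain ⟨u, v, huv, q, r, hlt⟩ := ih he
      exact ⟨u, v, huv, .cons hac q, r, by simp only [Walk.length_cons]; omega⟩

lemma Walk.dist_add_dist_lt_of_mem_edges {a b c d : V} (p : G.Walk a b) (q : G.Walk c d)
    {e : Sym2 V} (hp : e ∈ p.edges) (hq : e ∈ q.edges) :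
    G.dist a c + G.dist b d < p.length + q.length ∨
      G.dist a d + G.dist c b < p.length + q.length := by
  obtain ⟨u, v, rfl, pa, pb, hpl⟩ := p.exists_split_of_mem_edges hp
  obtain ⟨u', v', he, qc, qd, hql⟩ := q.exists_split_of_mem_edges hq
  rcases Sym2.eq_iff.1 he with ⟨rfl, rfl⟩ | ⟨rfl, rfl⟩
  · left
    have hac := dist_le (pa.append qc.reverse)
    have hbd := dist_le (pb.reverse.append qd)
    simp only [Walk.length_append, Walk.length_reverse] at hac hbd
    omega
  · right
    have had := dist_le (pa.append qd)
    have hcb := dist_le (qc.append pb)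
    simp only [Walk.length_append] at had hcb
    omega

end SimpleGraph

lemma Finset.sum_lt_sum_of_eq_off_pair {ι M : Type*} [Fintype ι] [DecidableEq ι]
    [AddCommMonoid M] [PartialOrder M] [IsOrderedCancelAddMonoid M] {f g : ι → M} {i j : ι}
    (hij : i ≠ j) (hfg : ∀ k, k ≠ i → k ≠ j → g k = f k) (hlt : g i + g j < f i + f j) :
    ∑ k, g k < ∑ k, f k := by
  rw [← Finset.sum_add_sum_compl {i, j} f, ← Finset.sum_add_sum_compl {i, j} g,
    Finset.sum_pair hij, Finset.sum_pair hij,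
    Finset.sum_congr rfl fun k hk => hfg k (by simp_all) (by simp_all)]
  exact add_lt_add_left hlt _

namespace SimpleGraph

variable {V ι : Type*} [Fintype ι] (G : SimpleGraph V)

/-- `F` pairs `F (.inl k)` with `F (.inr k)`. -/
noncomputable def pairingCost (F : ι ⊕ ι → V) : ℕ := ∑ k, G.dist (F (.inl k)) (F (.inr k))

variable {G}

/-- The cheaper pairing swaps the second partner of `i` with one of the partners of `j`. -/
lemma exists_pairingCost_comp_lt [DecidableEq ι] {F : ι ⊕ ι → V} {i j : ι} (hij : i ≠ j)
    (P : G.Walk (F (.inl i)) (F (.inr i))) (Q : G.Walk (F (.inl j)) (F (.inr j)))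
    (hP : P.length = G.dist (F (.inl i)) (F (.inr i)))
    (hQ : Q.length = G.dist (F (.inl j)) (F (.inr j)))
    {e : Sym2 V} (hPe : e ∈ P.edges) (hQe : e ∈ Q.edges) :
    ∃ τ : Equiv.Perm (ι ⊕ ι), G.pairingCost (F ∘ τ) < G.pairingCost F := by
  have hji := hij.symm
  rcases P.dist_add_dist_lt_of_mem_edges Q hPe hQe with hlt | hlt
  · refine ⟨Equiv.swap (.inr i) (.inl j), Finset.sum_lt_sum_of_eq_off_pair hij
      (fun k hki hkj => ?_) ?_⟩
    · simp [Equiv.swap_apply_of_ne_of_ne, hki, hkj]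
    · simp only [Function.comp_apply, Equiv.swap_apply_left, Equiv.swap_apply_right,
        Equiv.swap_apply_of_ne_of_ne, ne_eq, reduceCtorEq, Sum.inl.injEq, Sum.inr.injEq, hij, hji,
        not_false_eq_true]
      omega
  · refine ⟨Equiv.swap (.inr i) (.inr j), Finset.sum_lt_sum_of_eq_off_pair hij
      (fun k hki hkj => ?_) ?_⟩
    · simp [Equiv.swap_apply_of_ne_of_ne, hki, hkj]
    · simp only [Function.comp_apply, Equiv.swap_apply_left, Equiv.swap_apply_right,
        Equiv.swap_apply_of_ne_of_ne, ne_eq, reduceCtorEq, not_false_eq_true]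
      omega

end SimpleGraph

theorem tree_pairing_edge_disjoint_general {V : Type}
    (T : SimpleGraph V) (hT : T.IsTree) (S : Finset V) (hS : Even S.card) :
    ∃ (m : ℕ) (x y : Fin m → V) (P : (i : Fin m) → T.Walk (x i) (y i)),
      Function.Injective (Sum.elim x y : Fin m ⊕ Fin m → V) ∧
      (↑S : Set V) = Set.range x ∪ Set.range y ∧
      (∀ i, (P i).IsPath) ∧
      (∀ i j, i ≠ j → ∀ e ∈ (P i).edges, e ∉ (P j).edges) := by
  obtain ⟨m, hm⟩ := hS
  let F₀ : Fin m ⊕ Fin m ≃ S := finSumFinEquiv.trans ((finCongr hm.symm).trans S.equivFin.symm)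
  obtain ⟨σ, hσ⟩ := Finite.exists_min fun σ : Equiv.Perm (Fin m ⊕ Fin m) ↦
    T.pairingCost (Subtype.val ∘ F₀ ∘ σ)
  set F := Subtype.val ∘ F₀ ∘ σ
  choose P hPpath hPlen using fun k ↦
    hT.connected.exists_path_of_dist (F (.inl k)) (F (.inr k))
  refine ⟨m, F ∘ .inl, F ∘ .inr, P, ?_, ?_, hPpath, ?_⟩
  · rw [Sum.elim_comp_inl_inr]
    exact Subtype.val_injective.comp (F₀.injective.comp σ.injective)
  · rw [← Set.Sum.elim_range, Sum.elim_comp_inl_inr, Set.range_comp, Set.range_comp,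
      σ.range_eq_univ, Set.image_univ, F₀.range_eq_univ, Set.image_univ, Subtype.range_coe]
  · intro i j hij e hPi hPj
    obtain ⟨τ, hτ⟩ :=
      SimpleGraph.exists_pairingCost_comp_lt hij (P i) (P j) (hPlen i) (hPlen j) hPi hPj
    exact (hσ (σ * τ)).not_gt hτ

/-- Let `T` be a tree and `S` a set of vertices of `T` of
even cardinality.  Then `S` can be partitioned into pairs
`{x_1,y_1}, …, {x_m,y_m}` such that the paths of `T` joining `x_i` to `y_i`
are pairwise edge-disjoint. -/
theorem tree_pairing_edge_disjoint {V : Type} [Fintype V]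
    (T : SimpleGraph V) (hT : T.IsTree) (S : Finset V) (hS : Even S.card) :
    ∃ (m : ℕ) (x y : Fin m → V) (P : (i : Fin m) → T.Walk (x i) (y i)),
      Function.Injective (Sum.elim x y : Fin m ⊕ Fin m → V) ∧
      (↑S : Set V) = Set.range x ∪ Set.range y ∧
      (∀ i, (P i).IsPath) ∧
      (∀ i j, i ≠ j → ∀ e ∈ (P i).edges, e ∉ (P j).edges) :=
  tree_pairing_edge_disjoint_general T hT S hS
end

section
/- Let G be a graph, let v be a vertex of G, and let T ⊆ V(G) with v ∉ T. Suppose there exist four pairwise edge-disjoint paths of G from v to T, each with no internal vertex in T, and suppose there exist three pairwise edge-disjoint paths of G from v to distinct vertices t_1, t_2, t_3 ∈ T respectively, each with no internal vertex in T. Then there exist four pairwise edge-disjoint paths P_1, P_2, P_3, P_4 of G from v to T, each with no internal vertex in T, such that P_1, P_2, P_3 have final vertices t_1, t_2, t_3 respectively. -/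
open scoped Classical

/-!
Edge-disjoint paths from `v` to `T` that avoid `T` internally are treated as a unit-capacity flow
from `v` into the sink set `T`. The paths to the `t i` form a flow of value 3. Since four
edge-disjoint walks lead from `v` to `T`, the Ford–Fulkerson cut argument gives an augmenting path,
and rerouting along it yields a flow of value 4 whose in-degree at every sink has not dropped. Such
a flow decomposes into paths with any prescribed ends whose multiplicities are bounded by the
in-degrees: first one path to each `t i`, then one to a sink whose in-degree exceeds its
multiplicity among the `t i`. That sink exists because the value of a flow is the total in-degree of
the sinks.
-/

open Finset

namespace Multigraph

variable {G : Multigraph}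

@[ext] structure Dart (G : Multigraph) where
  edge : G.E
  src : G.V
  tgt : G.V
  ends_eq : G.ends edge = s(src, tgt)

def Dart.rev (d : G.Dart) : G.Dart := ⟨d.edge, d.tgt, d.src, d.ends_eq.trans Sym2.eq_swap⟩

@[simp] lemma Dart.rev_rev (d : G.Dart) : d.rev.rev = d := rfl

lemma Dart.eq_or_eq_rev_of_edge_eq {d d' : G.Dart} (h : d'.edge = d.edge) :
    d' = d ∨ d' = d.rev := by
  have hends := d'.ends_eq
  rw [h, d.ends_eq, Sym2.eq_iff] at hends
  rcases hends with ⟨h₁, h₂⟩ | ⟨h₁, h₂⟩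
  · exact .inl (Dart.ext h h₁.symm h₂.symm)
  · exact .inr (Dart.ext h h₂.symm h₁.symm)

namespace Walk

def darts : {a b : G.V} → G.Walk a b → List G.Dart
  | _, _, .nil _ => []
  | _, _, .cons u v _ e he p => ⟨e, u, v, he⟩ :: p.darts

variable {a b : G.V}

@[simp] lemma support_nil : (nil a : G.Walk a a).support = [a] := rfl
@[simp] lemma darts_nil : (nil a : G.Walk a a).darts = [] := rfl

section cons

variable (u v w : G.V) (e : G.E) (he : G.ends e = s(u, v)) (p : G.Walk v w)

@[simp] lemma support_cons : (cons u v w e he p).support = u :: p.support := rfl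
@[simp] lemma darts_cons : (cons u v w e he p).darts = ⟨e, u, v, he⟩ :: p.darts := rfl
@[simp] lemma edges_cons : (cons u v w e he p).edges = e :: p.edges := rfl

end cons

lemma edges_eq_map_edge_darts (p : G.Walk a b) : p.edges = p.darts.map Dart.edge := by
  induction p with
  | nil => rfl
  | cons _ _ _ _ _ p ih => simp [ih]

lemma mem_edges_iff {p : G.Walk a b} {e : G.E} : e ∈ p.edges ↔ ∃ d ∈ p.darts, d.edge = e := by
  rw [edges_eq_map_edge_darts, List.mem_map]

lemma start_mem_support (p : G.Walk a b) : a ∈ p.support := by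
  cases p <;> simp

lemma src_mem_support {p : G.Walk a b} {d : G.Dart} (hd : d ∈ p.darts) : d.src ∈ p.support := by
  induction p with
  | nil => simp at hd
  | cons u v w e he p ih =>
    rcases List.mem_cons.mp hd with rfl | hd
    · simp
    · simp [ih hd]

lemma tgt_mem_support {p : G.Walk a b} {d : G.Dart} (hd : d ∈ p.darts) : d.tgt ∈ p.support := by
  induction p with
  | nil => simp at hd
  | cons u v w e he p ih =>
    rcases List.mem_cons.mp hd with rfl | hd
    · simp [start_mem_support]
    · simp [ih hd]

lemma eq_or_exists_src_eq_of_mem_support {p : G.Walk a b} {x : G.V} (hx : x ∈ p.support) :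
    x = b ∨ ∃ d ∈ p.darts, d.src = x := by
  induction p with
  | nil => simpa using hx
  | cons u v w e he p ih =>
    rcases List.mem_cons.mp hx with rfl | hx
    · exact .inr ⟨_, List.mem_cons_self, rfl⟩
    · exact (ih hx).imp_right fun ⟨d, hd, hdx⟩ => ⟨d, List.mem_cons_of_mem _ hd, hdx⟩

lemma end_mem_support (p : G.Walk a b) : b ∈ p.support := by
  induction p with
  | nil => simp
  | cons _ _ _ _ _ p ih => simp [ih]

lemma isPath_cons_iff {u v w : G.V} {e : G.E} {he : G.ends e = s(u, v)} {p : G.Walk v w} :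
    (cons u v w e he p).IsPath ↔ u ∉ p.support ∧ p.IsPath := by
  simp [IsPath]

lemma IsPath.src_ne_end {p : G.Walk a b} (hp : p.IsPath) {d : G.Dart} (hd : d ∈ p.darts) :
    d.src ≠ b := by
  induction p with
  | nil => simp at hd
  | cons u v w e he p ih =>
    rw [isPath_cons_iff] at hp
    rcases List.mem_cons.mp hd with rfl | hd
    · exact fun h => hp.1 (h ▸ end_mem_support p)
    · exact ih hp.2 hd

lemma IsPath.tgt_ne_start {p : G.Walk a b} (hp : p.IsPath) {d : G.Dart} (hd : d ∈ p.darts) :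
    d.tgt ≠ a := by
  cases p with
  | nil => simp at hd
  | cons u v w e he p =>
    rw [isPath_cons_iff] at hp
    rcases List.mem_cons.mp hd with rfl | hd
    · exact fun h => hp.1 (h ▸ start_mem_support p)
    · exact fun h => hp.1 (h ▸ tgt_mem_support hd)

lemma IsPath.edges_nodup {p : G.Walk a b} (hp : p.IsPath) : p.edges.Nodup := by
  induction p with
  | nil => simp [edges]
  | cons u v w e he p ih =>
    rw [isPath_cons_iff] at hp
    refine List.nodup_cons.mpr ⟨fun he' => ?_, ih hp.2⟩
    obtain ⟨d, hd, rfl⟩ := mem_edges_iff.mp he'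
    rcases Dart.eq_or_eq_rev_of_edge_eq (d := ⟨d.edge, u, v, he⟩) (d' := d) rfl with h | h
    · have hu : d.src = u := by rw [h]
      exact hp.1 (hu ▸ src_mem_support hd)
    · have hu : d.tgt = u := by rw [h]; rfl
      exact hp.1 (hu ▸ tgt_mem_support hd)

lemma IsPath.darts_nodup {p : G.Walk a b} (hp : p.IsPath) : p.darts.Nodup := by
  have := hp.edges_nodup
  rw [edges_eq_map_edge_darts] at this
  exact this.of_map _

lemma exists_dart_src_mem_tgt_not_mem (p : G.Walk a b) {S : Set G.V} (ha : a ∈ S) (hb : b ∉ S) :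
    ∃ d ∈ p.darts, d.src ∈ S ∧ d.tgt ∉ S := by
  induction p with
  | nil => exact absurd ha hb
  | cons u v w e he p ih =>
    by_cases hv : v ∈ S
    · obtain ⟨d, hd, hdS⟩ := ih hv hb
      exact ⟨d, List.mem_cons_of_mem _ hd, hdS⟩
    · exact ⟨_, List.mem_cons_self, ha, hv⟩

lemma exists_darts_sublist_of_mem_support (p : G.Walk a b) {x : G.V} (hx : x ∈ p.support) :
    ∃ q : G.Walk x b, q.darts.Sublist p.darts ∧ q.support <:+ p.support := by
  induction p with
  | nil c =>
    obtain rfl : x = c := by simpa using hx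
    exact ⟨nil x, List.Sublist.refl _, List.suffix_refl _⟩
  | cons u v w e he p ih =>
    by_cases hxp : x ∈ p.support
    · obtain ⟨q, hqp, hq⟩ := ih hxp
      exact ⟨q, hqp.trans (List.sublist_cons_self _ _), hq.trans (List.suffix_cons _ _)⟩
    · obtain rfl : x = u := by simpa [hxp] using hx
      exact ⟨cons x v w e he p, List.Sublist.refl _, List.suffix_refl _⟩

lemma exists_isPath_darts_sublist (p : G.Walk a b) :
    ∃ q : G.Walk a b, q.IsPath ∧ q.darts.Sublist p.darts := by
  induction p with
  | nil => exact ⟨nil _, List.nodup_singleton _, List.Sublist.refl _⟩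
  | cons u v w e he p ih =>
    obtain ⟨q, hq, hqp⟩ := ih
    by_cases hu : u ∈ q.support
    · obtain ⟨r, hrq, hr⟩ := q.exists_darts_sublist_of_mem_support hu
      exact ⟨r, hq.sublist hr.sublist, (hrq.trans hqp).trans (List.sublist_cons_self _ _)⟩
    · exact ⟨cons u v w e he q, isPath_cons_iff.mpr ⟨hu, hq⟩, hqp.cons_cons _⟩

lemma exists_isPath_of_reflTransGen {P : G.Dart → Prop}
    (h : Relation.ReflTransGen (fun x y => ∃ d, P d ∧ d.src = x ∧ d.tgt = y) a b) :
    ∃ q : G.Walk a b, q.IsPath ∧ ∀ d ∈ q.darts, P d := by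
  suffices ∃ p : G.Walk a b, ∀ d ∈ p.darts, P d by
    obtain ⟨p, hp⟩ := this
    obtain ⟨q, hq, hqp⟩ := p.exists_isPath_darts_sublist
    exact ⟨q, hq, fun d hd => hp d (hqp.subset hd)⟩
  induction h using Relation.ReflTransGen.head_induction_on with
  | refl => exact ⟨nil b, by simp⟩
  | head hstep _ ih =>
    obtain ⟨d, hd, rfl, rfl⟩ := hstep
    obtain ⟨p, hp⟩ := ih
    refine ⟨cons d.src d.tgt b d.edge d.ends_eq p, ?_⟩
    rintro d' (_ | ⟨_, hd'⟩)
    · exact hd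
    · exact hp d' hd'

end Walk

lemma _root_.Fin.card_filter_snoc_eq {α : Type*} {n : ℕ} (s : Fin n → α) (u x : α) :
    #{i | (Fin.snoc s u : Fin (n + 1) → α) i = x} = #{i | s i = x} + if u = x then 1 else 0 := by
  simp only [card_filter, Fin.sum_univ_castSucc, Fin.snoc_castSucc, Fin.snoc_last]

section Degree

variable (F : Finset G.Dart) (u : G.V)

noncomputable def outDeg : ℕ := #{d ∈ F | d.src = u}

noncomputable def inDeg : ℕ := #{d ∈ F | d.tgt = u}

variable {F} {F' : Finset G.Dart}

lemma inDeg_mono (h : F ⊆ F') : inDeg F u ≤ inDeg F' u := card_le_card (filter_subset_filter _ h)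

lemma outDeg_union (h : Disjoint F F') : outDeg (F ∪ F') u = outDeg F u + outDeg F' u := by
  rw [outDeg, filter_union, card_union_of_disjoint (disjoint_filter_filter h)]; rfl

lemma inDeg_union (h : Disjoint F F') : inDeg (F ∪ F') u = inDeg F u + inDeg F' u := by
  rw [inDeg, filter_union, card_union_of_disjoint (disjoint_filter_filter h)]; rfl

lemma outDeg_filter_add_filter_not (p : G.Dart → Prop) [DecidablePred p] :
    outDeg {d ∈ F | p d} u + outDeg {d ∈ F | ¬ p d} u = outDeg F u := by
  rw [← outDeg_union _ (disjoint_filter_filter_not _ _ _), filter_union_filter_not_eq]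

lemma inDeg_filter_add_filter_not (p : G.Dart → Prop) [DecidablePred p] :
    inDeg {d ∈ F | p d} u + inDeg {d ∈ F | ¬ p d} u = inDeg F u := by
  rw [← inDeg_union _ (disjoint_filter_filter_not _ _ _), filter_union_filter_not_eq]

lemma outDeg_sdiff_add (h : F' ⊆ F) : outDeg (F \ F') u + outDeg F' u = outDeg F u := by
  rw [← outDeg_union _ disjoint_sdiff_self_left, sdiff_union_of_subset h]

lemma inDeg_sdiff_add (h : F' ⊆ F) : inDeg (F \ F') u + inDeg F' u = inDeg F u := by
  rw [← inDeg_union _ disjoint_sdiff_self_left, sdiff_union_of_subset h]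

lemma outDeg_image_rev : outDeg (F.image Dart.rev) u = inDeg F u := by
  rw [outDeg, filter_image, card_image_of_injective _ (Function.LeftInverse.injective Dart.rev_rev)]
  rfl

lemma inDeg_image_rev : inDeg (F.image Dart.rev) u = outDeg F u := by
  rw [inDeg, filter_image, card_image_of_injective _ (Function.LeftInverse.injective Dart.rev_rev)]
  rfl

lemma outDeg_insert {d : G.Dart} (hd : d ∉ F) :
    outDeg (insert d F) u = outDeg F u + if d.src = u then 1 else 0 := by
  rw [outDeg, filter_insert]
  split_ifs with h
  · rw [card_insert_of_notMem (fun h' => hd (mem_filter.mp h').1)]; rfl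
  · rfl

lemma inDeg_insert {d : G.Dart} (hd : d ∉ F) :
    inDeg (insert d F) u = inDeg F u + if d.tgt = u then 1 else 0 := by
  rw [inDeg, filter_insert]
  split_ifs with h
  · rw [card_insert_of_notMem (fun h' => hd (mem_filter.mp h').1)]; rfl
  · rfl

lemma outDeg_biUnion {ι : Type*} {s : Finset ι} {F : ι → Finset G.Dart}
    (h : (s : Set ι).PairwiseDisjoint F) : outDeg (s.biUnion F) u = ∑ i ∈ s, outDeg (F i) u := by
  rw [outDeg, filter_biUnion, card_biUnion (h.mono fun i => filter_subset _ _)]; rfl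

lemma inDeg_biUnion {ι : Type*} {s : Finset ι} {F : ι → Finset G.Dart}
    (h : (s : Set ι).PairwiseDisjoint F) : inDeg (s.biUnion F) u = ∑ i ∈ s, inDeg (F i) u := by
  rw [inDeg, filter_biUnion, card_biUnion (h.mono fun i => filter_subset _ _)]; rfl

lemma sum_outDeg (S : Finset G.V) : ∑ u ∈ S, outDeg F u = #{d ∈ F | d.src ∈ S} :=
  sum_card_fiberwise_eq_card_filter _ _ _

lemma sum_inDeg (S : Finset G.V) : ∑ u ∈ S, inDeg F u = #{d ∈ F | d.tgt ∈ S} :=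
  sum_card_fiberwise_eq_card_filter _ _ _

end Degree

/-- A unit-capacity flow from `v` into the sink set `T`, given by the set of darts carrying
one unit each. -/
structure IsFlow (v : G.V) (T : Set G.V) (F : Finset G.Dart) : Prop where
  injOn_edge : Set.InjOn Dart.edge (F : Set G.Dart)
  src_not_mem : ∀ d ∈ F, d.src ∉ T
  inDeg_source : inDeg F v = 0
  outDeg_eq_inDeg : ∀ u ∉ T, u ≠ v → outDeg F u = inDeg F u

variable {v : G.V} {T : Set G.V} {F P : Finset G.Dart}

namespace Walk

variable {a b : G.V}

lemma IsPath.outDeg_add_ite {p : G.Walk a b} (hp : p.IsPath) (x : G.V) :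
    outDeg p.darts.toFinset x + (if b = x then 1 else 0) =
      inDeg p.darts.toFinset x + (if a = x then 1 else 0) := by
  induction p with
  | nil => simp [outDeg, inDeg]
  | cons u v w e he p ih =>
    have hd := (List.nodup_cons.mp hp.darts_nodup).1
    have := ih (isPath_cons_iff.mp hp).2
    simp only [darts_cons, List.toFinset_cons]
    rw [outDeg_insert _ (by simpa using hd), inDeg_insert _ (by simpa using hd)]
    dsimp only
    omega

variable {t : G.V} {p : G.Walk v t}

lemma IsPath.src_not_mem (hp : p.IsPath) (hT : ∀ x ∈ p.support, x ∈ T → x = t) :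
    ∀ d ∈ p.darts, d.src ∉ T :=
  fun _ hd hdT => hp.src_ne_end hd (hT _ (src_mem_support hd) hdT)

lemma eq_end_of_mem_support (hsrc : ∀ d ∈ p.darts, d.src ∉ T) :
    ∀ x ∈ p.support, x ∈ T → x = t := by
  intro x hx hxT
  obtain h | ⟨d, hd, rfl⟩ := eq_or_exists_src_eq_of_mem_support hx
  · exact h
  · exact absurd hxT (hsrc d hd)

lemma IsPath.isFlow (hp : p.IsPath) (ht : t ∈ T) (hsrc : ∀ d ∈ p.darts, d.src ∉ T) :
    IsFlow v T p.darts.toFinset where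
  injOn_edge := by
    intro d hd d' hd' h
    have := hp.edges_nodup
    rw [edges_eq_map_edge_darts] at this
    exact List.inj_on_of_nodup_map this (List.mem_toFinset.mp hd) (List.mem_toFinset.mp hd') h
  src_not_mem d hd := hsrc d (List.mem_toFinset.mp hd)
  inDeg_source := card_eq_zero.mpr <| filter_eq_empty_iff.mpr fun d hd =>
    hp.tgt_ne_start (List.mem_toFinset.mp hd)
  outDeg_eq_inDeg u hu huv := by
    have := hp.outDeg_add_ite u
    rw [if_neg (fun h : t = u => hu (h ▸ ht)), if_neg (Ne.symm huv)] at this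
    simpa using this

lemma IsPath.outDeg_start (hp : p.IsPath) (hvt : v ≠ t) : outDeg p.darts.toFinset v = 1 := by
  have h := hp.outDeg_add_ite v
  have h₀ : inDeg p.darts.toFinset v = 0 := card_eq_zero.mpr <| filter_eq_empty_iff.mpr
    fun d hd => hp.tgt_ne_start (List.mem_toFinset.mp hd)
  rw [if_neg hvt.symm, if_pos rfl, h₀] at h
  simpa using h

lemma IsPath.inDeg_of_mem (hp : p.IsPath) (hv : v ∉ T) (hsrc : ∀ d ∈ p.darts, d.src ∉ T)
    {x : G.V} (hx : x ∈ T) : inDeg p.darts.toFinset x = if t = x then 1 else 0 := by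
  have h := hp.outDeg_add_ite x
  have h₀ : outDeg p.darts.toFinset x = 0 := card_eq_zero.mpr <| filter_eq_empty_iff.mpr
    fun d hd hdx => hsrc d (List.mem_toFinset.mp hd) (hdx ▸ hx)
  rw [if_neg (fun h : v = x => hv (h ▸ hx)), h₀] at h
  simpa using h.symm

end Walk

lemma isFlow_biUnion {ι : Type*} {s : Finset ι} {F : ι → Finset G.Dart}
    (hF : ∀ i ∈ s, IsFlow v T (F i))
    (hdisj : ∀ i ∈ s, ∀ j ∈ s, i ≠ j → ∀ d ∈ F i, ∀ d' ∈ F j, d.edge ≠ d'.edge) :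
    IsFlow v T (s.biUnion F) := by
  have hpw : (s : Set ι).PairwiseDisjoint F := fun i hi j hj hij =>
    disjoint_left.mpr fun d hdi hdj => hdisj i hi j hj hij d hdi d hdj rfl
  refine ⟨?_, ?_, ?_, ?_⟩
  · simp only [coe_biUnion]
    intro d hd d' hd' h
    simp only [Set.mem_iUnion, mem_coe] at hd hd'
    obtain ⟨i, hi, hd⟩ := hd
    obtain ⟨j, hj, hd'⟩ := hd'
    by_cases hij : i = j
    · subst hij
      exact (hF i hi).injOn_edge hd hd' h
    · exact absurd h (hdisj i hi j hj hij d hd d' hd')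
  · simp only [mem_biUnion]
    rintro d ⟨i, hi, hd⟩
    exact (hF i hi).src_not_mem d hd
  · rw [inDeg_biUnion _ hpw]
    exact sum_eq_zero fun i hi => (hF i hi).inDeg_source
  · intro u hu huv
    rw [outDeg_biUnion _ hpw, inDeg_biUnion _ hpw]
    exact sum_congr rfl fun i hi => (hF i hi).outDeg_eq_inDeg u hu huv

section PathFamily

variable {ι : Type*} {t : ι → G.V} {Q : ∀ i, G.Walk v (t i)}

lemma edge_ne_of_edges_disjoint (hdisj : ∀ i j, i ≠ j → ∀ e ∈ (Q i).edges, e ∉ (Q j).edges)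
    {i j : ι} (hij : i ≠ j) {d d' : G.Dart} (hd : d ∈ (Q i).darts) (hd' : d' ∈ (Q j).darts) :
    d.edge ≠ d'.edge := fun h =>
  hdisj i j hij d.edge (Walk.mem_edges_iff.mpr ⟨d, hd, rfl⟩)
    (Walk.mem_edges_iff.mpr ⟨d', hd', h.symm⟩)

lemma isFlow_biUnion_darts [Fintype ι] (hQ : ∀ i, (Q i).IsPath) (ht : ∀ i, t i ∈ T)
    (hsrc : ∀ i, ∀ d ∈ (Q i).darts, d.src ∉ T)
    (hdisj : ∀ i j, i ≠ j → ∀ e ∈ (Q i).edges, e ∉ (Q j).edges) :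
    IsFlow v T (univ.biUnion fun i => (Q i).darts.toFinset) :=
  isFlow_biUnion (fun i _ => (hQ i).isFlow (ht i) (hsrc i)) fun _ _ _ _ hij _ hd _ hd' =>
    edge_ne_of_edges_disjoint hdisj hij (List.mem_toFinset.mp hd) (List.mem_toFinset.mp hd')

lemma inDeg_biUnion_darts [Fintype ι] (hQ : ∀ i, (Q i).IsPath) (hv : v ∉ T)
    (hsrc : ∀ i, ∀ d ∈ (Q i).darts, d.src ∉ T)
    (hdisj : ∀ i j, i ≠ j → ∀ e ∈ (Q i).edges, e ∉ (Q j).edges) {u : G.V} (hu : u ∈ T) :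
    inDeg (univ.biUnion fun i => (Q i).darts.toFinset) u = #{i | t i = u} := by
  rw [inDeg_biUnion _ fun i _ j _ hij => disjoint_left.mpr fun d hd hd' =>
    edge_ne_of_edges_disjoint hdisj hij (List.mem_toFinset.mp hd) (List.mem_toFinset.mp hd') rfl]
  simp_rw [(hQ _).inDeg_of_mem hv (hsrc _) hu]
  rw [sum_boole, Nat.cast_id]

end PathFamily

namespace IsFlow

lemma sdiff (hF : IsFlow v T F) (hP : IsFlow v T P) (h : P ⊆ F) : IsFlow v T (F \ P) where
  injOn_edge := hF.injOn_edge.mono (by simp)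
  src_not_mem d hd := hF.src_not_mem d (mem_sdiff.mp hd).1
  inDeg_source := by
    have := inDeg_sdiff_add v h
    rw [hF.inDeg_source, hP.inDeg_source] at this
    omega
  outDeg_eq_inDeg u hu huv := by
    have := outDeg_sdiff_add u h
    have := inDeg_sdiff_add u h
    have := hF.outDeg_eq_inDeg u hu huv
    have := hP.outDeg_eq_inDeg u hu huv
    omega

lemma card_leaving (hF : IsFlow v T F) {S : Finset G.V} (hS : ∀ u ∈ S, u ∉ T) :
    #{d ∈ F | d.src ∈ S ∧ d.tgt ∉ S} =
      #{d ∈ F | d.tgt ∈ S ∧ d.src ∉ S} + if v ∈ S then outDeg F v else 0 := by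
  have hsum : ∑ u ∈ S, outDeg F u = ∑ u ∈ S, inDeg F u + if v ∈ S then outDeg F v else 0 := by
    rw [← sum_ite_eq' S v (fun _ => outDeg F v), ← sum_add_distrib]
    refine sum_congr rfl fun u hu => ?_
    by_cases huv : u = v
    · subst huv
      simp [hF.inDeg_source]
    · simp [huv, hF.outDeg_eq_inDeg u (hS u hu) huv]
  rw [sum_outDeg, sum_inDeg] at hsum
  have h₁ := card_filter_add_card_filter_not (s := {d ∈ F | d.src ∈ S}) (fun d => d.tgt ∈ S)
  have h₂ := card_filter_add_card_filter_not (s := {d ∈ F | d.tgt ∈ S}) (fun d => d.src ∈ S)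
  simp only [filter_filter, and_comm] at h₁ h₂ ⊢
  omega

lemma sum_inDeg_eq [Fintype G.V] (hF : IsFlow v T F) (hv : v ∉ T) :
    ∑ u ∈ T.toFinset, inDeg F u = outDeg F v := by
  have h := hF.card_leaving (S := T.toFinsetᶜ) (by simp)
  simp only [mem_compl, Set.mem_toFinset, not_not, hv, not_false_eq_true, if_true] at h
  have hempty : {d ∈ F | d.tgt ∉ T ∧ d.src ∈ T} = ∅ :=
    filter_eq_empty_iff.mpr fun d hd h => hF.src_not_mem d hd h.2
  have hsink : {d ∈ F | d.src ∉ T ∧ d.tgt ∈ T} = {d ∈ F | d.tgt ∈ T.toFinset} :=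
    filter_congr fun d hd => by simp [hF.src_not_mem d hd]
  rw [hempty, hsink, card_empty, zero_add] at h
  rw [sum_inDeg, h]

lemma exists_isPath (hF : IsFlow v T F) {t : G.V} (ht : t ∈ T) (hin : 0 < inDeg F t) :
    ∃ p : G.Walk v t, p.IsPath ∧ ∀ d ∈ p.darts, d ∈ F := by
  refine Walk.exists_isPath_of_reflTransGen ?_
  by_contra hvt
  set S := {u ∈ F.image Dart.src |
    Relation.ReflTransGen (fun x y => ∃ d, d ∈ F ∧ d.src = x ∧ d.tgt = y) u t}
  have hS : ∀ u ∈ S, u ∉ T := by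
    intro u hu
    obtain ⟨d, hd, rfl⟩ := mem_image.mp (mem_filter.mp hu).1
    exact hF.src_not_mem d hd
  have h := hF.card_leaving hS
  have hvS : v ∉ S := fun hv => hvt (mem_filter.mp hv).2
  rw [if_neg hvS, add_zero] at h
  have henter : {d ∈ F | d.tgt ∈ S ∧ d.src ∉ S} = ∅ :=
    filter_eq_empty_iff.mpr fun d hd ⟨htS, hsS⟩ =>
      hsS (mem_filter.mpr ⟨mem_image_of_mem _ hd, .head ⟨d, hd, rfl, rfl⟩ (mem_filter.mp htS).2⟩)
  obtain ⟨d, hd⟩ := card_pos.mp hin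
  obtain ⟨hdF, hdt⟩ := mem_filter.mp hd
  have hleave : d ∈ {d ∈ F | d.src ∈ S ∧ d.tgt ∉ S} :=
    mem_filter.mpr ⟨hdF, mem_filter.mpr ⟨mem_image_of_mem _ hdF, .single ⟨d, hdF, rfl, hdt⟩⟩,
      fun h' => hS _ h' (hdt ▸ ht)⟩
  rw [henter, card_empty] at h
  exact notMem_empty d (card_eq_zero.mp h ▸ hleave)

end IsFlow

def IsResidual (F : Finset G.Dart) (d : G.Dart) : Prop := d.edge ∉ F.image Dart.edge ∨ d.rev ∈ F

/-- On edges used by both `F` and `R` (necessarily in opposite directions), the flows cancel. -/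
noncomputable def augment (F R : Finset G.Dart) : Finset G.Dart :=
  {d ∈ F | d.edge ∉ R.image Dart.edge} ∪ {d ∈ R | d.edge ∉ F.image Dart.edge}

variable {R : Finset G.Dart}

lemma filter_edge_mem_image_eq_image_rev (hF : Set.InjOn Dart.edge (F : Set G.Dart))
    (hres : ∀ d ∈ R, IsResidual F d) :
    {f ∈ F | f.edge ∈ R.image Dart.edge} = {d ∈ R | d.edge ∈ F.image Dart.edge}.image Dart.rev := by
  ext f
  simp only [mem_filter, mem_image]
  constructor
  · rintro ⟨hf, d, hd, hdf⟩
    have hrev : d.rev ∈ F := (hres d hd).resolve_left fun h => h (mem_image.mpr ⟨f, hf, hdf.symm⟩)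
    exact ⟨d, ⟨hd, f, hf, hdf.symm⟩, hF hrev hf hdf⟩
  · rintro ⟨d, ⟨hd, f', hf', hdf'⟩, rfl⟩
    exact ⟨(hres d hd).resolve_left fun h => h (mem_image.mpr ⟨f', hf', hdf'⟩), d, hd, rfl⟩

lemma outDeg_augment_add (hF : Set.InjOn Dart.edge (F : Set G.Dart))
    (hres : ∀ d ∈ R, IsResidual F d) (u : G.V) :
    outDeg (augment F R) u + inDeg F u + inDeg R u =
      inDeg (augment F R) u + outDeg F u + outDeg R u := by
  have hdisj : Disjoint {d ∈ F | d.edge ∉ R.image Dart.edge} {d ∈ R | d.edge ∉ F.image Dart.edge} :=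
    disjoint_left.mpr fun d hdF hdR =>
      (mem_filter.mp hdR).2 (mem_image_of_mem _ (mem_filter.mp hdF).1)
  have hA := filter_edge_mem_image_eq_image_rev hF hres
  have h₁ := outDeg_union u hdisj
  have h₂ := inDeg_union u hdisj
  have h₃ := outDeg_filter_add_filter_not (F := F) u (fun d => d.edge ∈ R.image Dart.edge)
  have h₄ := inDeg_filter_add_filter_not (F := F) u (fun d => d.edge ∈ R.image Dart.edge)
  have h₅ := outDeg_filter_add_filter_not (F := R) u (fun d => d.edge ∈ F.image Dart.edge)
  have h₆ := inDeg_filter_add_filter_not (F := R) u (fun d => d.edge ∈ F.image Dart.edge)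
  rw [hA, outDeg_image_rev] at h₃
  rw [hA, inDeg_image_rev] at h₄
  rw [augment]
  omega

namespace IsFlow

lemma augment (hF : IsFlow v T F) (hR : IsFlow v T R) (hres : ∀ d ∈ R, IsResidual F d) :
    IsFlow v T (augment F R) where
  injOn_edge := by
    intro d hd d' hd' h
    simp only [Multigraph.augment, coe_union, Set.mem_union, mem_coe, mem_filter] at hd hd'
    rcases hd with ⟨hdF, -⟩ | ⟨hdR, hdF⟩ <;> rcases hd' with ⟨hd'F, -⟩ | ⟨hd'R, hd'F⟩
    · exact hF.injOn_edge hdF hd'F h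
    · exact absurd (h ▸ mem_image_of_mem _ hdF) hd'F
    · exact absurd (h ▸ mem_image_of_mem _ hd'F) hdF
    · exact hR.injOn_edge hdR hd'R h
  src_not_mem d hd := by
    rcases mem_union.mp hd with hd | hd
    · exact hF.src_not_mem d (mem_filter.mp hd).1
    · exact hR.src_not_mem d (mem_filter.mp hd).1
  inDeg_source := by
    have hsub : Multigraph.augment F R ⊆ F ∪ R :=
      union_subset_union (filter_subset _ _) (filter_subset _ _)
    have h₁ := inDeg_mono v hsub
    have h₂ : inDeg (F ∪ R) v ≤ inDeg F v + inDeg R v := by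
      rw [inDeg, filter_union]
      exact card_union_le _ _
    rw [hF.inDeg_source, hR.inDeg_source] at h₂
    omega
  outDeg_eq_inDeg u hu huv := by
    have := outDeg_augment_add hF.injOn_edge hres u
    have := hF.outDeg_eq_inDeg u hu huv
    have := hR.outDeg_eq_inDeg u hu huv
    omega

lemma outDeg_augment (hF : IsFlow v T F) (hR : IsFlow v T R) (hres : ∀ d ∈ R, IsResidual F d) :
    outDeg (Multigraph.augment F R) v = outDeg F v + outDeg R v := by
  have := outDeg_augment_add hF.injOn_edge hres v
  have := (hF.augment hR hres).inDeg_source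
  have := hF.inDeg_source
  have := hR.inDeg_source
  omega

lemma inDeg_le_augment (hF : IsFlow v T F) (hR : IsFlow v T R) (hres : ∀ d ∈ R, IsResidual F d)
    {u : G.V} (hu : u ∈ T) : inDeg F u ≤ inDeg (Multigraph.augment F R) u := by
  refine card_le_card fun f hf => ?_
  obtain ⟨hfF, hft⟩ := mem_filter.mp hf
  refine mem_filter.mpr ⟨mem_union_left _ (mem_filter.mpr ⟨hfF, fun hfR => ?_⟩), hft⟩
  obtain ⟨d, hd, hdf⟩ := mem_image.mp hfR
  have hrev : d.rev ∈ F :=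
    (hres d hd).resolve_left fun h => h (hdf ▸ mem_image_of_mem _ hfF)
  have hsrc : d.src = u := (congrArg Dart.tgt (hF.injOn_edge hrev hfF hdf)).trans hft
  exact hR.src_not_mem d hd (hsrc ▸ hu)

/-- If no sink were reachable, the vertices reachable from `v` along residual darts would form a
cut which no flow enters and which each `P i` leaves along a different flow dart. -/
lemma exists_augmenting_path [Fintype G.V] (hF : IsFlow v T F) {ι : Type*} [Fintype ι]
    {w : ι → G.V} (P : ∀ i, G.Walk v (w i)) (hw : ∀ i, w i ∈ T)
    (hP : ∀ i j, i ≠ j → ∀ e ∈ (P i).edges, e ∉ (P j).edges) (hlt : outDeg F v < Fintype.card ι) :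
    ∃ t ∈ T, ∃ p : G.Walk v t, p.IsPath ∧ ∀ d ∈ p.darts, d.src ∉ T ∧ IsResidual F d := by
  let Reach := Relation.ReflTransGen fun x y => ∃ d : G.Dart,
    (d.src ∉ T ∧ IsResidual F d) ∧ d.src = x ∧ d.tgt = y
  suffices ∃ t ∈ T, Reach v t by
    obtain ⟨t, ht, h⟩ := this
    exact ⟨t, ht, Walk.exists_isPath_of_reflTransGen h⟩
  by_contra! hno
  set S : Finset G.V := {u | Reach v u}
  have hS : ∀ u ∈ S, u ∉ T := fun u hu huT => hno u huT (mem_filter.mp hu).2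
  have hreach {d : G.Dart} (hd : IsResidual F d) (hdS : d.src ∈ S) : d.tgt ∈ S :=
    mem_filter.mpr ⟨mem_univ _, .tail (mem_filter.mp hdS).2 ⟨d, ⟨hS _ hdS, hd⟩, rfl, rfl⟩⟩
  have h := hF.card_leaving hS
  rw [if_pos (mem_filter.mpr ⟨mem_univ _, .refl⟩)] at h
  have henter : {d ∈ F | d.tgt ∈ S ∧ d.src ∉ S} = ∅ :=
    filter_eq_empty_iff.mpr fun d hd ⟨htS, hsS⟩ => hsS (hreach (d := d.rev) (.inr hd) htS)
  have hcross (i : ι) : ∃ d ∈ (P i).darts, d.src ∈ S ∧ d.tgt ∉ S :=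
    (P i).exists_dart_src_mem_tgt_not_mem (S := (S : Set G.V)) (mem_filter.mpr ⟨mem_univ _, .refl⟩)
      fun h => hS _ h (hw i)
  choose c hcP hcS using hcross
  have hcF (i : ι) : c i ∈ F := by
    have hnres : ¬ IsResidual F (c i) := fun hres => (hcS i).2 (hreach hres (hcS i).1)
    simp only [IsResidual, not_or, not_not, mem_image] at hnres
    obtain ⟨⟨f, hf, hfc⟩, hrev⟩ := hnres
    rcases Dart.eq_or_eq_rev_of_edge_eq hfc with rfl | rfl
    · exact hf
    · exact absurd hf hrev
  have hinj : Function.Injective c := by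
    intro i j hij
    by_contra hne
    exact hP i j hne _ (Walk.mem_edges_iff.mpr ⟨c i, hcP i, rfl⟩)
      (Walk.mem_edges_iff.mpr ⟨c j, hcP j, by rw [hij]⟩)
  have hcard : Fintype.card ι ≤ #{d ∈ F | d.src ∈ S ∧ d.tgt ∉ S} :=
    card_le_card_of_injOn c (fun i _ => mem_filter.mpr ⟨hcF i, hcS i⟩) hinj.injOn
  rw [henter, card_empty] at h
  omega

lemma exists_outDeg_succ [Fintype G.V] (hF : IsFlow v T F) (hv : v ∉ T) {ι : Type*} [Fintype ι]
    {w : ι → G.V} (P : ∀ i, G.Walk v (w i)) (hw : ∀ i, w i ∈ T)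
    (hP : ∀ i j, i ≠ j → ∀ e ∈ (P i).edges, e ∉ (P j).edges) (hlt : outDeg F v < Fintype.card ι) :
    ∃ F', IsFlow v T F' ∧ outDeg F' v = outDeg F v + 1 ∧ ∀ u ∈ T, inDeg F u ≤ inDeg F' u := by
  obtain ⟨t, ht, p, hp, hpres⟩ := hF.exists_augmenting_path P hw hP hlt
  have hR := hp.isFlow ht fun d hd => (hpres d hd).1
  have hres : ∀ d ∈ p.darts.toFinset, IsResidual F d :=
    fun d hd => (hpres d (List.mem_toFinset.mp hd)).2
  refine ⟨_, hF.augment hR hres, ?_, fun u hu => hF.inDeg_le_augment hR hres hu⟩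
  rw [hF.outDeg_augment hR hres, hp.outDeg_start fun h => hv (h ▸ ht)]

lemma exists_card_le_outDeg [Fintype G.V] (hF : IsFlow v T F) (hv : v ∉ T) {ι : Type*} [Fintype ι]
    {w : ι → G.V} (P : ∀ i, G.Walk v (w i)) (hw : ∀ i, w i ∈ T)
    (hP : ∀ i j, i ≠ j → ∀ e ∈ (P i).edges, e ∉ (P j).edges) :
    ∃ F', IsFlow v T F' ∧ Fintype.card ι ≤ outDeg F' v ∧ ∀ u ∈ T, inDeg F u ≤ inDeg F' u := by
  obtain ⟨n, hn⟩ : ∃ n, Fintype.card ι ≤ outDeg F v + n := ⟨_, le_add_self⟩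
  induction n generalizing F with
  | zero => exact ⟨F, hF, hn, fun _ _ => le_rfl⟩
  | succ n ih =>
    by_cases hlt : outDeg F v < Fintype.card ι
    · obtain ⟨F₁, hF₁, hval, hin⟩ := hF.exists_outDeg_succ hv P hw hP hlt
      obtain ⟨F', hF', hval', hin'⟩ := ih hF₁ (by omega)
      exact ⟨F', hF', hval', fun u hu => (hin u hu).trans (hin' u hu)⟩
    · exact ⟨F, hF, not_lt.mp hlt, fun _ _ => le_rfl⟩

lemma exists_card_filter_lt_inDeg [Fintype G.V] (hF : IsFlow v T F) (hv : v ∉ T) {ι : Type*}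
    [Fintype ι] {s : ι → G.V} (hs : ∀ i, s i ∈ T) (hlt : Fintype.card ι < outDeg F v) :
    ∃ u ∈ T, #{i | s i = u} < inDeg F u := by
  have hsum : ∑ u ∈ T.toFinset, #{i | s i = u} = Fintype.card ι := by
    refine (sum_card_fiberwise_eq_card_filter univ T.toFinset s).trans ?_
    rw [filter_true_of_mem (by simp [hs]), card_univ]
  obtain ⟨u, hu, hlt⟩ :=
    exists_lt_of_sum_lt (hsum.trans_lt (hlt.trans_eq (hF.sum_inDeg_eq hv).symm))
  exact ⟨u, Set.mem_toFinset.mp hu, hlt⟩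

lemma exists_paths (hF : IsFlow v T F) (hv : v ∉ T) {n : ℕ} (s : Fin n → G.V) (hs : ∀ i, s i ∈ T)
    (hcard : ∀ u ∈ T, #{i | s i = u} ≤ inDeg F u) :
    ∃ P : ∀ i, G.Walk v (s i), (∀ i, (P i).IsPath) ∧ (∀ i, ∀ d ∈ (P i).darts, d ∈ F) ∧
      ∀ i j, i ≠ j → ∀ e ∈ (P i).edges, e ∉ (P j).edges := by
  induction n generalizing F with
  | zero => exact ⟨fun i => i.elim0, fun i => i.elim0, fun i => i.elim0, fun i => i.elim0⟩
  | succ n ih =>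
    have hcard₀ := hcard (s 0) (hs 0)
    rw [Fin.card_filter_univ_succ', if_pos rfl] at hcard₀
    obtain ⟨p, hp, hpF⟩ := hF.exists_isPath (hs 0) (by omega)
    have hpsrc : ∀ d ∈ p.darts, d.src ∉ T := fun d hd => hF.src_not_mem d (hpF d hd)
    have hsub : p.darts.toFinset ⊆ F := fun d hd => hpF d (List.mem_toFinset.mp hd)
    obtain ⟨P, hP, hPF, hPdisj⟩ := ih (hF.sdiff (hp.isFlow (hs 0) hpsrc) hsub)
      (fun i => s i.succ) (fun i => hs i.succ) fun u hu => by
        have h₁ := hcard u hu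
        have h₂ := inDeg_sdiff_add u hsub
        rw [Fin.card_filter_univ_succ'] at h₁
        rw [hp.inDeg_of_mem hv hpsrc hu] at h₂
        omega
    have hPF' (i : Fin n) : ∀ d ∈ (P i).darts, d ∈ F := fun d hd => (mem_sdiff.mp (hPF i d hd)).1
    have hdisj (i : Fin n) : ∀ e ∈ p.edges, e ∉ (P i).edges := by
      intro e he he'
      obtain ⟨d, hd, rfl⟩ := Walk.mem_edges_iff.mp he
      obtain ⟨d', hd', hdd'⟩ := Walk.mem_edges_iff.mp he'
      obtain ⟨hd'F, hd'p⟩ := mem_sdiff.mp (hPF i d' hd')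
      exact hd'p (List.mem_toFinset.mpr (hF.injOn_edge (hpF d hd) hd'F hdd'.symm ▸ hd))
    refine ⟨Fin.cases p P, Fin.cases hp hP, Fin.cases hpF hPF', ?_⟩
    intro i j hij
    induction i using Fin.cases with
    | zero =>
      induction j using Fin.cases with
      | zero => exact absurd rfl hij
      | succ j => exact hdisj j
    | succ i =>
      induction j using Fin.cases with
      | zero => exact fun e he he' => hdisj i e he' he
      | succ j => exact hPdisj i j (fun h => hij (h ▸ rfl))

end IsFlow

end Multigraph

open Multigraph

theorem four_edge_disjoint_paths_with_prescribed_ends_general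
    (G : Multigraph) [Fintype G.V] (v : G.V) (T : Set G.V)
    (hv : v ∉ T)
    (h4 : ∃ (w : Fin 4 → G.V) (P : (i : Fin 4) → G.Walk v (w i)),
      (∀ i, w i ∈ T) ∧ (∀ i, (P i).IsPath) ∧
      (∀ i, ∀ x ∈ (P i).support, x ∈ T → x = w i) ∧
      (∀ i j, i ≠ j → ∀ e ∈ (P i).edges, e ∉ (P j).edges))
    (t : Fin 3 → G.V) (ht : ∀ i, t i ∈ T)
    (h3 : ∃ Q : (i : Fin 3) → G.Walk v (t i),
      (∀ i, (Q i).IsPath) ∧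
      (∀ i, ∀ x ∈ (Q i).support, x ∈ T → x = t i) ∧
      (∀ i j, i ≠ j → ∀ e ∈ (Q i).edges, e ∉ (Q j).edges)) :
    ∃ (w : Fin 4 → G.V) (P : (i : Fin 4) → G.Walk v (w i)),
      (∀ i, w i ∈ T) ∧ (∀ i, (P i).IsPath) ∧
      (∀ i : Fin 3, w i.castSucc = t i) ∧
      (∀ i, ∀ x ∈ (P i).support, x ∈ T → x = w i) ∧
      (∀ i j, i ≠ j → ∀ e ∈ (P i).edges, e ∉ (P j).edges) := by
  obtain ⟨w, P, hwT, -, -, hP⟩ := h4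
  obtain ⟨Q, hQ, hQT, hQdisj⟩ := h3
  have hQsrc (i : Fin 3) := (hQ i).src_not_mem (hQT i)
  obtain ⟨F, hF, hval, hin⟩ :=
    (isFlow_biUnion_darts hQ ht hQsrc hQdisj).exists_card_le_outDeg hv P hwT hP
  obtain ⟨u, huT, hu⟩ :=
    hF.exists_card_filter_lt_inDeg hv ht (by simp only [Fintype.card_fin] at hval ⊢; omega)
  have hsT (i : Fin 4) : (Fin.snoc t u : Fin 4 → G.V) i ∈ T := by
    induction i using Fin.lastCases with
    | last => rw [Fin.snoc_last]; exact huT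
    | cast i => rw [Fin.snoc_castSucc]; exact ht i
  have hcard (x : G.V) (hx : x ∈ T) :
      #{i | (Fin.snoc t u : Fin 4 → G.V) i = x} ≤ inDeg F x := by
    rw [Fin.card_filter_snoc_eq]
    split_ifs with hux
    · exact hux ▸ hu
    · exact inDeg_biUnion_darts hQ hv hQsrc hQdisj hx ▸ hin x hx
  obtain ⟨R, hR, hRF, hRdisj⟩ := hF.exists_paths hv (Fin.snoc t u) hsT hcard
  exact ⟨Fin.snoc t u, R, hsT, hR, by simp,
    fun i => Walk.eq_end_of_mem_support fun d hd => hF.src_not_mem d (hRF i d hd), hRdisj⟩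

/-- the augmenting-path fact. Let `v` be a vertex of a
graph `G` and `T ⊆ V(G)` with `v ∉ T`.  If there are four pairwise
edge-disjoint paths of `G` from `v` to `T`, each with no internal vertex in
`T`, and three pairwise edge-disjoint paths of `G` from `v` to distinct
vertices `t 0, t 1, t 2 ∈ T`, each with no internal vertex in `T`, then
there are four pairwise edge-disjoint paths `P 0, P 1, P 2, P 3` of `G` from
`v` to `T`, each with no internal vertex in `T`, such that `P 0, P 1, P 2`
have final vertices `t 0, t 1, t 2` respectively. -/
theorem four_edge_disjoint_paths_with_prescribed_ends
    (G : Multigraph) [Fintype G.V] [Fintype G.E] (v : G.V) (T : Set G.V)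
    (hv : v ∉ T)
    (h4 : ∃ (w : Fin 4 → G.V) (P : (i : Fin 4) → G.Walk v (w i)),
      (∀ i, w i ∈ T) ∧ (∀ i, (P i).IsPath) ∧
      (∀ i, ∀ x ∈ (P i).support, x ∈ T → x = w i) ∧
      (∀ i j, i ≠ j → ∀ e ∈ (P i).edges, e ∉ (P j).edges))
    (t : Fin 3 → G.V) (ht : ∀ i, t i ∈ T) (htinj : Function.Injective t)
    (h3 : ∃ Q : (i : Fin 3) → G.Walk v (t i),
      (∀ i, (Q i).IsPath) ∧
      (∀ i, ∀ x ∈ (Q i).support, x ∈ T → x = t i) ∧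
      (∀ i j, i ≠ j → ∀ e ∈ (Q i).edges, e ∉ (Q j).edges)) :
    ∃ (w : Fin 4 → G.V) (P : (i : Fin 4) → G.Walk v (w i)),
      (∀ i, w i ∈ T) ∧ (∀ i, (P i).IsPath) ∧
      (∀ i : Fin 3, w i.castSucc = t i) ∧
      (∀ i, ∀ x ∈ (P i).support, x ∈ T → x = w i) ∧
      (∀ i j, i ≠ j → ∀ e ∈ (P i).edges, e ∉ (P j).edges) :=
  four_edge_disjoint_paths_with_prescribed_ends_general G v T hv h4 t ht h3
end
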